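/- arXiv:1608.00782 — 5 statements merged into one kernel-verified Lean document; each statement's English description precedes it below -/
import Mathlib

section
/- There is no graph G on 2k vertices with k ≥ 4 whose matching polynomial has 2k distinct nonzero integer zeros, because the number of edges Σθ_i^2 ≥ k(k+1)(2k+1)/6 would exceed the maximum possible number of edges C(2k,2). -/
open Polynomial Finset

/-- `p(G,r)`: the number of `r`-matchings of `G`, i.e. sets of `r` pairwise
non-incident edges. -/
noncomputable def matchCount {V : Type*} [Fintype V] [DecidableEq V]
    (G : SimpleGraph V) (r : ℕ) : ℕ :=
  Set.ncard {s : Finset (Sym2 V) | ↑s ⊆ G.edgeSet ∧ s.card = r ∧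
    ∀ e ∈ s, ∀ f ∈ s, e ≠ f → ∀ v : V, ¬(v ∈ e ∧ v ∈ f)}

/-- The matching polynomial `μ(G,x) = Σ_r (-1)^r p(G,r) x^(n-2r)`. -/
noncomputable def matchPoly {V : Type*} [Fintype V] [DecidableEq V]
    (G : SimpleGraph V) : Polynomial ℝ :=
  ∑ r ∈ Finset.range (Fintype.card V / 2 + 1),
    Polynomial.C ((-1 : ℝ) ^ r * (matchCount G r : ℝ)) *
      Polynomial.X ^ (Fintype.card V - 2 * r)

-- auxiliary lemmas

lemma aux_monic {ι : Type*} (s : Finset ι) (a : ι → ℝ) :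
    (∏ i ∈ s, (X ^ 2 - C (a i))).Monic :=
  monic_prod_of_monic _ _ (fun i _ => monic_X_pow_sub_C (a i) two_ne_zero)

lemma aux_natDegree {ι : Type*} (s : Finset ι) (a : ι → ℝ) :
    (∏ i ∈ s, (X ^ 2 - C (a i))).natDegree = 2 * s.card := by
  rw [natDegree_prod_of_monic _ _ (fun i _ => monic_X_pow_sub_C (a i) two_ne_zero)]
  simp [natDegree_X_pow_sub_C, mul_comm]

lemma aux_lead {ι : Type*} (s : Finset ι) (a : ι → ℝ) :
    (∏ i ∈ s, (X ^ 2 - C (a i))).coeff (2 * s.card) = 1 := by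
  have h := (aux_monic s a).coeff_natDegree
  rwa [aux_natDegree s a] at h

lemma aux_sub2 {ι : Type*} {s : Finset ι} (hs : s.Nonempty) (a : ι → ℝ) :
    (∏ i ∈ s, (X ^ 2 - C (a i))).coeff (2 * s.card - 2) = -∑ i ∈ s, a i := by
  induction hs using Finset.Nonempty.cons_induction with
  | singleton i => simp
  | cons j t hj ht ih =>
    rw [Finset.prod_cons, Finset.card_cons, Finset.sum_cons]
    have hc : t.card ≥ 1 := ht.card_pos
    have key : 2 * (t.card + 1) - 2 = 2 * t.card := by omega
    rw [key, sub_mul, coeff_sub, coeff_C_mul]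
    have h2 : 2 * t.card = (2 * t.card - 2) + 2 := by omega
    rw [h2, coeff_X_pow_mul, ← h2, aux_lead t a, ih]
    ring

lemma sum_sq_range (k : ℕ) : 6 * ∑ i ∈ range k, (i + 1) ^ 2 = k * (k + 1) * (2 * k + 1) := by
  induction k with
  | zero => simp
  | succ n ih => rw [Finset.sum_range_succ, Nat.mul_add, ih]; ring

lemma finset_sum_sq_lower (T : Finset ℕ) (h0 : 0 ∉ T) :
    ∑ i ∈ range T.card, (i + 1) ^ 2 ≤ ∑ t ∈ T, t ^ 2 := by
  induction T using Finset.strongInduction with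
  | _ T ih =>
    rcases T.eq_empty_or_nonempty with rfl | hT
    · simp
    · have hM : T.max' hT ∈ T := T.max'_mem hT
      have hcard : T.card ≤ T.max' hT := by
        have hsub : T ⊆ Finset.Icc 1 (T.max' hT) := by
          intro t htT
          simp only [Finset.mem_Icc]
          exact ⟨by rcases Nat.eq_zero_or_pos t with rfl | h; exact absurd htT h0; exact h,
            T.le_max' t htT⟩
        calc T.card ≤ (Finset.Icc 1 (T.max' hT)).card := Finset.card_le_card hsub
        _ = T.max' hT := by rw [Nat.card_Icc]; omega
      have herase := ih (T.erase (T.max' hT)) (Finset.erase_ssubset hM)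
        (fun h => h0 (Finset.mem_of_mem_erase h))
      have hce : (T.erase (T.max' hT)).card = T.card - 1 := Finset.card_erase_of_mem hM
      have hc1 : 1 ≤ T.card := hT.card_pos
      have : ∑ i ∈ range T.card, (i + 1) ^ 2
          = (∑ i ∈ range (T.card - 1), (i + 1) ^ 2) + T.card ^ 2 := by
        conv_lhs => rw [show T.card = (T.card - 1) + 1 by omega]
        rw [Finset.sum_range_succ, Nat.sub_add_cancel hc1]
      rw [this, ← Finset.add_sum_erase T _ hM]
      rw [hce] at herase
      have hp : T.card ^ 2 ≤ T.max' hT ^ 2 := Nat.pow_le_pow_left hcard 2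
      have hq : (T.card - 1 + 1) ^ 2 = T.card ^ 2 := by rw [Nat.sub_add_cancel hc1]
      omega

lemma matchCount_one {V : Type*} [Fintype V] [DecidableEq V] (G : SimpleGraph V) :
    matchCount G 1 = G.edgeSet.ncard := by
  unfold matchCount
  have hset : {s : Finset (Sym2 V) | ↑s ⊆ G.edgeSet ∧ s.card = 1 ∧
      ∀ e ∈ s, ∀ f ∈ s, e ≠ f → ∀ v : V, ¬(v ∈ e ∧ v ∈ f)}
      = (fun e => ({e} : Finset (Sym2 V))) '' G.edgeSet := by
    ext s
    constructor
    · rintro ⟨hsub, hcard, -⟩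
      obtain ⟨e, rfl⟩ := Finset.card_eq_one.mp hcard
      exact ⟨e, hsub (by simp), rfl⟩
    · rintro ⟨e, he, rfl⟩
      refine ⟨by simpa using he, rfl, ?_⟩
      intro x hx y hy hxy
      simp only [Finset.mem_singleton] at hx hy
      exact absurd (hx.trans hy.symm) hxy
  rw [hset, Set.ncard_image_of_injective _ (fun a b h => by simpa using h)]

theorem stmt_1 {V : Type*} [Fintype V] [DecidableEq V] (G : SimpleGraph V)
    (k : ℕ) (hk : 4 ≤ k) (hV : Fintype.card V = 2 * k)
    (θ : Fin k → ℕ) (hinj : Function.Injective θ) (hpos : ∀ i, 0 < θ i) :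
    matchPoly G ≠ ∏ i, (Polynomial.X ^ 2 - Polynomial.C ((θ i : ℝ) ^ 2)) := by
  intro heq
  -- coefficient of LHS at 2k-2
  have hL : (matchPoly G).coeff (2 * k - 2) = -(matchCount G 1 : ℝ) := by
    unfold matchPoly
    rw [hV]
    rw [finset_sum_coeff]
    have hdiv : 2 * k / 2 = k := by omega
    rw [hdiv]
    rw [Finset.sum_eq_single 1]
    · simp
    · intro r hr hr1
      simp only [coeff_C_mul, coeff_X_pow]
      rw [if_neg (by simp only [Finset.mem_range] at hr; omega)]
      ring
    · intro h
      exact absurd (Finset.mem_range.mpr (by omega)) h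
  -- coefficient of RHS at 2k-2
  have hR : (∏ i, (X ^ 2 - C ((θ i : ℝ) ^ 2))).coeff (2 * k - 2)
      = -∑ i, ((θ i : ℝ) ^ 2) := by
    have huniv : (Finset.univ : Finset (Fin k)).card = k := by simp
    have : Nonempty (Fin k) := ⟨⟨0, by omega⟩⟩
    have hne : (Finset.univ : Finset (Fin k)).Nonempty := Finset.univ_nonempty
    have := aux_sub2 hne (fun i => ((θ i : ℝ) ^ 2))
    rwa [huniv] at this
  have hcoeff : -(matchCount G 1 : ℝ) = -∑ i, ((θ i : ℝ) ^ 2) := by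
    rw [← hL, ← hR, heq]
  have hnat : matchCount G 1 = ∑ i, (θ i) ^ 2 := by
    have h2 : (matchCount G 1 : ℝ) = ((∑ i, (θ i) ^ 2 : ℕ) : ℝ) := by
      push_cast
      linarith [hcoeff]
    exact_mod_cast h2
  -- upper bound
  have hub : matchCount G 1 ≤ k * (2 * k - 1) := by
    classical
    rw [matchCount_one, ← SimpleGraph.coe_edgeFinset, Set.ncard_coe_finset]
    calc G.edgeFinset.card ≤ (Fintype.card V).choose 2 :=
      SimpleGraph.card_edgeFinset_le_card_choose_two
    _ = k * (2 * k - 1) := by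
        rw [hV, Nat.choose_two_right,
          show 2 * k * (2 * k - 1) = k * (2 * k - 1) * 2 by ring,
          Nat.mul_div_cancel _ two_pos]
  -- lower bound
  have hlb : k * (k + 1) * (2 * k + 1) ≤ 6 * ∑ i, (θ i) ^ 2 := by
    rw [← sum_sq_range k]
    have himg : ∑ i, (θ i) ^ 2 = ∑ t ∈ Finset.image θ Finset.univ, t ^ 2 := by
      rw [Finset.sum_image (fun a _ b _ h => hinj h)]
    have hcard : (Finset.image θ Finset.univ).card = k := by
      rw [Finset.card_image_of_injective _ hinj, Finset.card_univ, Fintype.card_fin]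
    have h0 : 0 ∉ Finset.image θ Finset.univ := by
      simp only [Finset.mem_image, Finset.mem_univ, true_and, not_exists]
      exact fun i h => (hpos i).ne' h
    have := finset_sum_sq_lower _ h0
    rw [hcard] at this
    rw [himg]
    omega
  rw [hnat] at hub
  obtain ⟨m, rfl⟩ : ∃ m, k = m + 4 := ⟨k - 4, by omega⟩
  rw [show 2 * (m + 4) - 1 = 2 * m + 7 by omega] at hub
  nlinarith [hub, hlb]
end

section
/- If G is a graph on 2n vertices with a perfect matching whose matching polynomial has no zero in the open interval (0,1), then G is a disjoint union of n copies of K_2 (i.e., E(G) is itself a perfect matching). -/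
open Polynomial Finset

/-!
By Heilmann–Lieb, `μ(G[A], x)` has no zero in the upper half-plane: the recursion
`μ(A) = x μ(A - u) - ∑_{v ~ u} μ(A - u - v)` shows inductively that `μ(A) / μ(A - u)` maps the
upper half-plane into itself. So `μ(G, x) = F(x²)` for a monic `F` of degree `n` whose roots are
squares of real zeros of `μ`; since `μ` has no zero in `(0, 1)` and `F(0) = ±p(G, n) ≠ 0`, every
root `tᵢ` of `F` is at least `1`.
By Vieta `p(G, n) = ∏ tᵢ` and `p(G, n - 1) = ∑ᵢ ∏_{j ≠ i} tⱼ ≤ n ∏ tᵢ`, with equality only if all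
`tᵢ = 1`. Equality does hold, because removing one of the `n` edges of a perfect matching gives
an `(n - 1)`-matching from which the perfect matching can be recovered, so
`n p(G, n) ≤ p(G, n - 1)`. Hence `|E(G)| = p(G, 1) = ∑ tᵢ = n`, and the edges of `G` are those of
its perfect matching.
-/

theorem Multiset.eq_one_of_card_mul_prod_le_sum_prod_erase {R : Type*} [CommRing R]
    [LinearOrder R] [IsStrictOrderedRing R] {s : Multiset R} (hs : ∀ a ∈ s, 1 ≤ a)
    (h : Multiset.card s * s.prod ≤ (s.map fun a => (s.erase a).prod).sum) :
    ∀ a ∈ s, a = 1 := by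
  have hprod_erase : ∀ a ∈ s, 1 ≤ (s.erase a).prod := fun a _ =>
    Multiset.prod_induction (1 ≤ ·) _ (fun _ _ => one_le_mul_of_one_le_of_one_le) le_rfl
      fun b hb => hs b (Multiset.mem_of_mem_erase hb)
  have hle : ∀ a ∈ s, (s.erase a).prod ≤ s.prod := fun a ha => by
    rw [← Multiset.prod_erase ha]
    exact le_mul_of_one_le_left (zero_le_one.trans (hprod_erase a ha)) (hs a ha)
  by_contra! ⟨a, ha, ha1⟩
  have hlt : (s.erase a).prod < s.prod := by
    rw [← Multiset.prod_erase ha]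
    exact lt_mul_of_one_lt_left (zero_lt_one.trans_le (hprod_erase a ha))
      (lt_of_le_of_ne (hs a ha) (Ne.symm ha1))
  have := Multiset.sum_lt_sum hle ⟨a, ha, hlt⟩
  rw [Multiset.map_const', Multiset.sum_replicate, nsmul_eq_mul] at this
  exact this.not_ge h

namespace SimpleGraph

variable {V : Type*} {G : SimpleGraph V}

variable (G) in
def IsMatchingOn (A : Finset V) (s : Finset (Sym2 V)) : Prop :=
  ↑s ⊆ G.edgeSet ∧ (∀ e ∈ s, ∀ v ∈ e, v ∈ A) ∧
    ∀ e ∈ s, ∀ f ∈ s, e ≠ f → ∀ v : V, ¬(v ∈ e ∧ v ∈ f)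

namespace IsMatchingOn

variable {A B : Finset V} {s t : Finset (Sym2 V)}

lemma eq_of_mem_of_mem (hs : G.IsMatchingOn A s) {e f : Sym2 V} (he : e ∈ s) (hf : f ∈ s)
    {v : V} (hve : v ∈ e) (hvf : v ∈ f) : e = f :=
  by_contra fun hef => hs.2.2 e he f hf hef v ⟨hve, hvf⟩

lemma mono (hs : G.IsMatchingOn A s) (hAB : A ⊆ B) : G.IsMatchingOn B s :=
  ⟨hs.1, fun e he v hv => hAB (hs.2.1 e he v hv), hs.2.2⟩

lemma subset (hs : G.IsMatchingOn A s) (hts : t ⊆ s) : G.IsMatchingOn A t :=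
  ⟨(Finset.coe_subset.2 hts).trans hs.1, fun e he => hs.2.1 e (hts he),
    fun e he f hf => hs.2.2 e (hts he) f (hts hf)⟩

lemma notMem_of_notMem {u : V} (hs : G.IsMatchingOn A s) (hu : u ∉ A) {e : Sym2 V}
    (he : u ∈ e) : e ∉ s :=
  fun h => hu (hs.2.1 e h u he)

variable [DecidableEq V]

lemma insert_edge {u v : V} (hs : G.IsMatchingOn ((A.erase u).erase v) s) (huv : G.Adj u v)
    (hu : u ∈ A) (hv : v ∈ A) : G.IsMatchingOn A (insert s(u, v) s) := by
  have hsA : G.IsMatchingOn A s :=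
    hs.mono ((Finset.erase_subset _ _).trans (Finset.erase_subset _ _))
  have hfar : ∀ e ∈ s, ∀ w ∈ e, w ≠ u ∧ w ≠ v := fun e he w hw => by
    have := hs.2.1 e he w hw
    simp only [Finset.mem_erase] at this
    exact ⟨this.2.1, this.1⟩
  refine ⟨?_, ?_, ?_⟩
  · simp only [Finset.coe_insert, Set.insert_subset_iff]
    exact ⟨huv, hsA.1⟩
  · simp only [Finset.mem_insert, forall_eq_or_imp]
    refine ⟨fun w hw => ?_, hsA.2.1⟩
    rcases Sym2.mem_iff.1 hw with rfl | rfl <;> assumption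
  · simp only [Finset.mem_insert]
    rintro e (rfl | he) f (rfl | hf) hef w ⟨hwe, hwf⟩
    · exact hef rfl
    · rcases Sym2.mem_iff.1 hwe with rfl | rfl
      exacts [(hfar f hf _ hwf).1 rfl, (hfar f hf _ hwf).2 rfl]
    · rcases Sym2.mem_iff.1 hwf with rfl | rfl
      exacts [(hfar e he _ hwe).1 rfl, (hfar e he _ hwe).2 rfl]
    · exact hs.2.2 e he f hf hef w ⟨hwe, hwf⟩

lemma erase_edge {u v : V} (hs : G.IsMatchingOn A s) (huv : s(u, v) ∈ s) :
    G.IsMatchingOn ((A.erase u).erase v) (s.erase s(u, v)) := by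
  refine ⟨(hs.subset (Finset.erase_subset _ _)).1, fun e he w hw => ?_,
    (hs.subset (Finset.erase_subset _ _)).2.2⟩
  obtain ⟨hne, he'⟩ := Finset.mem_erase.1 he
  refine Finset.mem_erase.2 ⟨fun hwv => ?_, Finset.mem_erase.2 ⟨fun hwu => ?_, hs.2.1 e he' w hw⟩⟩
  · exact hne (hs.eq_of_mem_of_mem he' huv hw (hwv ▸ Sym2.mem_mk_right u v))
  · exact hne (hs.eq_of_mem_of_mem he' huv hw (hwu ▸ Sym2.mem_mk_left u v))

end IsMatchingOn

section EdgeVerts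

variable [DecidableEq V]

def edgeVerts (s : Finset (Sym2 V)) : Finset V := s.biUnion Sym2.toFinset

lemma mem_edgeVerts {s : Finset (Sym2 V)} {v : V} : v ∈ edgeVerts s ↔ ∃ e ∈ s, v ∈ e := by
  simp [edgeVerts]

lemma IsMatchingOn.card_edgeVerts {A : Finset V} {s : Finset (Sym2 V)}
    (hs : G.IsMatchingOn A s) : #(edgeVerts s) = 2 * #s := by
  rw [edgeVerts, Finset.card_biUnion, Finset.sum_const_nat, mul_comm]
  · exact fun e he => Sym2.card_toFinset_of_not_isDiag e (G.not_isDiag_of_mem_edgeSet (hs.1 he))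
  · intro e he f hf hef
    simp only [Finset.disjoint_left, Sym2.mem_toFinset]
    exact fun v hve hvf => hef (hs.eq_of_mem_of_mem he hf hve hvf)

lemma IsMatchingOn.edgeVerts_subset {A : Finset V} {s : Finset (Sym2 V)}
    (hs : G.IsMatchingOn A s) : edgeVerts s ⊆ A := by
  intro v hv
  obtain ⟨e, he, hve⟩ := mem_edgeVerts.1 hv
  exact hs.2.1 e he v hve

end EdgeVerts

section Matchings

variable [Fintype V]

variable (G) in
noncomputable def matchingsOn (A : Finset V) (r : ℕ) : Finset (Finset (Sym2 V)) :=
  open Classical in univ.filter fun s => G.IsMatchingOn A s ∧ #s = r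

variable (G) in
/-- `p(G[A], r)`, the number of `r`-matchings of the subgraph induced on `A`. -/
noncomputable def matchNumOn (A : Finset V) (r : ℕ) : ℕ := #(G.matchingsOn A r)

@[simp]
lemma mem_matchingsOn {A : Finset V} {r : ℕ} {s : Finset (Sym2 V)} :
    s ∈ G.matchingsOn A r ↔ G.IsMatchingOn A s ∧ #s = r := by
  simp [matchingsOn]

lemma matchNumOn_zero (A : Finset V) : G.matchNumOn A 0 = 1 := by
  rw [matchNumOn, Finset.card_eq_one]
  refine ⟨∅, Finset.eq_singleton_iff_unique_mem.2 ⟨?_, fun s hs => ?_⟩⟩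
  · simp [IsMatchingOn]
  · exact Finset.card_eq_zero.1 (mem_matchingsOn.1 hs).2

lemma matchNumOn_eq_zero {A : Finset V} {r : ℕ} (h : #A < 2 * r) : G.matchNumOn A r = 0 := by
  classical
  rw [matchNumOn, Finset.card_eq_zero, Finset.eq_empty_iff_forall_notMem]
  intro s hs
  obtain ⟨hm, rfl⟩ := mem_matchingsOn.1 hs
  have := Finset.card_le_card hm.edgeVerts_subset
  rw [hm.card_edgeVerts] at this
  omega

variable (G) in
lemma matchNumOn_univ_one : G.matchNumOn univ 1 = G.edgeSet.ncard := by
  classical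
  have himg : G.matchingsOn univ 1 = G.edgeFinset.image ({·}) := by
    ext s
    simp only [mem_matchingsOn, Finset.mem_image, Finset.card_eq_one, mem_edgeFinset]
    constructor
    · rintro ⟨hs, e, rfl⟩
      exact ⟨e, hs.1 (Finset.mem_singleton_self e), rfl⟩
    · rintro ⟨e, he, rfl⟩
      refine ⟨⟨by simpa using he, fun _ _ _ _ => Finset.mem_univ _, ?_⟩, e, rfl⟩
      simp
  rw [matchNumOn, himg, Finset.card_image_of_injective _ Finset.singleton_injective,
    ← Set.ncard_coe_finset, coe_edgeFinset]

variable [DecidableEq V]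

variable (G) in
lemma matchCount_eq_matchNumOn_univ (r : ℕ) : matchCount G r = G.matchNumOn univ r := by
  rw [matchCount, matchNumOn, ← Set.ncard_coe_finset]
  congr 1
  ext s
  simp only [ne_eq, not_and, Set.mem_ofPred_eq, SetLike.mem_coe, mem_matchingsOn, IsMatchingOn,
    mem_univ, implies_true, true_and]
  tauto

lemma filter_notMem_edgeVerts_matchingsOn (u : V) (A : Finset V) (r : ℕ) :
    (G.matchingsOn A r).filter (fun s => u ∉ edgeVerts s) = G.matchingsOn (A.erase u) r := by
  ext s
  simp only [Finset.mem_filter, mem_matchingsOn, mem_edgeVerts, not_exists, not_and]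
  constructor
  · rintro ⟨⟨hs, hr⟩, hu⟩
    refine ⟨⟨hs.1, fun e he w hw => Finset.mem_erase.2 ⟨?_, hs.2.1 e he w hw⟩, hs.2.2⟩, hr⟩
    rintro rfl
    exact hu e he hw
  · rintro ⟨hs, hr⟩
    exact ⟨⟨hs.mono (Finset.erase_subset _ _), hr⟩,
      fun e he hue => hs.notMem_of_notMem (Finset.notMem_erase u A) hue he⟩

section Recursion

variable [DecidableRel G.Adj]

lemma filter_mem_edgeVerts_matchingsOn {u : V} {A : Finset V} (hu : u ∈ A) (r : ℕ) :
    (G.matchingsOn A (r + 1)).filter (fun s => u ∈ edgeVerts s) =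
      ((A.erase u).filter (G.Adj u)).biUnion
        fun v => (G.matchingsOn ((A.erase u).erase v) r).image (insert s(u, v)) := by
  ext s
  simp only [Finset.mem_filter, Finset.mem_biUnion, Finset.mem_image, mem_matchingsOn,
    mem_edgeVerts, Finset.mem_erase]
  constructor
  · rintro ⟨⟨hs, hr⟩, e, he, hue⟩
    obtain ⟨v, rfl⟩ := Sym2.mem_iff_exists.1 hue
    have huv : G.Adj u v := hs.1 he
    refine ⟨v, ⟨⟨huv.ne.symm, hs.2.1 _ he v (Sym2.mem_mk_right u v)⟩, huv⟩, s.erase s(u, v),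
      ⟨hs.erase_edge he, ?_⟩, Finset.insert_erase he⟩
    rw [Finset.card_erase_of_mem he, hr, Nat.add_sub_cancel]
  · rintro ⟨v, ⟨⟨-, hv⟩, huv⟩, m, ⟨hm, hr⟩, rfl⟩
    have hnotMem : s(u, v) ∉ m :=
      hm.notMem_of_notMem (by simp) (Sym2.mem_mk_left u v)
    exact ⟨⟨hm.insert_edge huv hu hv, by rw [Finset.card_insert_of_notMem hnotMem, hr]⟩,
      s(u, v), Finset.mem_insert_self _ _, Sym2.mem_mk_left u v⟩

lemma matchNumOn_succ {u : V} {A : Finset V} (hu : u ∈ A) (r : ℕ) :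
    G.matchNumOn A (r + 1) = G.matchNumOn (A.erase u) (r + 1) +
      ∑ v ∈ (A.erase u).filter (G.Adj u), G.matchNumOn ((A.erase u).erase v) r := by
  have hnotMem : ∀ v, ∀ m ∈ G.matchingsOn ((A.erase u).erase v) r, s(u, v) ∉ m :=
    fun v m hm => (mem_matchingsOn.1 hm).1.notMem_of_notMem (by simp) (Sym2.mem_mk_left u v)
  rw [matchNumOn, ← Finset.card_filter_add_card_filter_not (p := fun s => u ∈ edgeVerts s),
    add_comm, filter_notMem_edgeVerts_matchingsOn, filter_mem_edgeVerts_matchingsOn hu,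
    Finset.card_biUnion, matchNumOn]
  · refine congrArg _ (Finset.sum_congr rfl fun v _ => Finset.card_image_of_injOn ?_)
    intro m hm m' hm' hmm'
    simpa [Finset.erase_insert (hnotMem v m hm), Finset.erase_insert (hnotMem v m' hm')]
      using congrArg (Finset.erase · s(u, v)) hmm'
  · intro v hv w hw hvw
    simp only [Finset.mem_coe, Finset.mem_filter, Finset.mem_erase] at hv hw
    rw [Function.onFun, Finset.disjoint_left]
    simp only [Finset.mem_image, mem_matchingsOn, not_exists, not_and]
    rintro _ ⟨m, ⟨hm, -⟩, rfl⟩ m' - hmm'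
    have hins := hm.insert_edge hv.2 hu hv.1.2
    refine hvw (Sym2.congr_right.1 (hins.eq_of_mem_of_mem (Finset.mem_insert_self _ _) ?_
      (Sym2.mem_mk_left u v) (Sym2.mem_mk_left u w)))
    rw [← hmm']
    exact Finset.mem_insert_self _ _

end Recursion

section PerfectMatchings

variable {n : ℕ}

lemma edgeVerts_eq_univ (hV : Fintype.card V = 2 * n) {s : Finset (Sym2 V)}
    (hs : s ∈ G.matchingsOn univ n) : edgeVerts s = univ := by
  obtain ⟨hm, rfl⟩ := mem_matchingsOn.1 hs
  exact Finset.eq_univ_of_card _ (by rw [hm.card_edgeVerts, hV])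

/-- A perfect matching is determined by any of its `(n-1)`-submatchings: the missing edge
joins the two uncovered vertices. -/
lemma edge_eq_of_erase_eq_erase (hV : Fintype.card V = 2 * n) {s t : Finset (Sym2 V)}
    (hs : s ∈ G.matchingsOn univ n) (ht : t ∈ G.matchingsOn univ n) {e f : Sym2 V}
    (he : e ∈ s) (hst : s.erase e = t.erase f) : e = f := by
  have hsub : ∀ x ∈ e, x ∈ f := by
    intro x hxe
    obtain ⟨g, hg, hxg⟩ := mem_edgeVerts.1 (edgeVerts_eq_univ hV ht ▸ Finset.mem_univ x)
    by_contra hxf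
    have hgs : g ∈ s.erase e := hst ▸ Finset.mem_erase.2 ⟨fun h => hxf (h ▸ hxg), hg⟩
    exact Finset.ne_of_mem_erase hgs
      ((mem_matchingsOn.1 hs).1.eq_of_mem_of_mem (Finset.mem_of_mem_erase hgs) he hxg hxe)
  induction e with
  | _ a b =>
    have hab : a ≠ b := G.ne_of_adj ((mem_matchingsOn.1 hs).1.1 he)
    exact ((Sym2.mem_and_mem_iff hab).1
      ⟨hsub a (Sym2.mem_mk_left a b), hsub b (Sym2.mem_mk_right a b)⟩).symm

variable (G) in
lemma card_mul_matchNumOn_le (hV : Fintype.card V = 2 * n) :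
    n * G.matchNumOn univ n ≤ G.matchNumOn univ (n - 1) := by
  calc n * G.matchNumOn univ n = #((G.matchingsOn univ n).sigma id) := by
        simp only [Finset.card_sigma, id]
        rw [Finset.sum_const_nat fun s hs => (mem_matchingsOn.1 hs).2, matchNumOn, mul_comm]
    _ ≤ G.matchNumOn univ (n - 1) := by
      refine Finset.card_le_card_of_injOn (fun p => p.1.erase p.2) ?_ ?_
      · rintro ⟨s, e⟩ hse
        simp only [Finset.coe_sigma, Set.mem_sigma_iff, Finset.mem_coe, id] at hse
        obtain ⟨hm, hcard⟩ := mem_matchingsOn.1 hse.1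
        exact mem_matchingsOn.2 ⟨hm.subset (Finset.erase_subset _ _),
          by rw [Finset.card_erase_of_mem hse.2, hcard]⟩
      · rintro ⟨s, e⟩ hse ⟨t, f⟩ htf hst
        simp only [Finset.coe_sigma, Set.mem_sigma_iff, Finset.mem_coe, id] at hse htf hst
        obtain rfl := edge_eq_of_erase_eq_erase hV hse.1 htf.1 hse.2 hst
        rw [← Finset.insert_erase hse.2, hst, Finset.insert_erase htf.2]

lemma Subgraph.IsPerfectMatching.exists_mem_matchingsOn {M : G.Subgraph}
    (hM : M.IsPerfectMatching) (hV : Fintype.card V = 2 * n) :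
    ∃ s ∈ G.matchingsOn univ n, (s : Set (Sym2 V)) = M.edgeSet := by
  set s := (Set.toFinite M.edgeSet).toFinset
  have hsM : (s : Set (Sym2 V)) = M.edgeSet := Set.Finite.coe_toFinset _
  have hm : G.IsMatchingOn univ s := by
    refine ⟨hsM ▸ M.edgeSet_subset, fun _ _ _ _ => Finset.mem_univ _, ?_⟩
    intro e he f hf hef v ⟨hve, hvf⟩
    rw [← Finset.mem_coe, hsM] at he hf
    obtain ⟨w, rfl⟩ := Sym2.mem_iff_exists.1 hve
    obtain ⟨w', rfl⟩ := Sym2.mem_iff_exists.1 hvf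
    exact hef (by rw [hM.1.eq_of_adj_left (Subgraph.mem_edgeSet.1 he) (Subgraph.mem_edgeSet.1 hf)])
  refine ⟨s, mem_matchingsOn.2 ⟨hm, ?_⟩, hsM⟩
  have hcover : edgeVerts s = univ := Finset.eq_univ_of_forall fun v => by
    obtain ⟨w, hw, -⟩ := hM.1 (hM.2 v)
    exact mem_edgeVerts.2 ⟨s(v, w), by rw [← Finset.mem_coe, hsM]; exact hw, Sym2.mem_mk_left v w⟩
  have := hm.card_edgeVerts
  rw [hcover, Finset.card_univ, hV] at this
  omega

end PerfectMatchings

end Matchings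

section HeilmannLieb

variable [Fintype V]

variable (G) in
/-- `μ(G[A], x)`, written with integer exponents so that the recursion in `A` needs no
truncated subtraction. -/
noncomputable def matchFun (A : Finset V) (x : ℂ) : ℂ :=
  ∑ r ∈ range (#A + 1), (-1) ^ r * (G.matchNumOn A r : ℂ) * x ^ ((#A : ℤ) - 2 * r)

lemma matchFun_eq_sum_range {A : Finset V} {N : ℕ} (hN : #A + 1 ≤ N) (x : ℂ) :
    G.matchFun A x =
      ∑ r ∈ range N, (-1) ^ r * (G.matchNumOn A r : ℂ) * x ^ ((#A : ℤ) - 2 * r) := by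
  refine Finset.sum_subset (Finset.range_subset_range.2 hN) fun r _ hr => ?_
  rw [matchNumOn_eq_zero (by simp only [Finset.mem_range] at hr; omega)]
  simp

lemma matchFun_empty (x : ℂ) : G.matchFun ∅ x = 1 := by
  simp [matchFun, matchNumOn_zero]

variable [DecidableEq V]

section Recursion

variable [DecidableRel G.Adj]

lemma matchFun_eq_sub_sum {u : V} {A : Finset V} (hu : u ∈ A) {x : ℂ} (hx : x ≠ 0) :
    G.matchFun A x = x * G.matchFun (A.erase u) x -
      ∑ v ∈ (A.erase u).filter (G.Adj u), G.matchFun ((A.erase u).erase v) x := by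
  have hAu : #(A.erase u) + 1 = #A := Finset.card_erase_add_one hu
  have hA : G.matchFun A x = x ^ #A + ∑ r ∈ range #A,
      (-1) ^ (r + 1) * (G.matchNumOn A (r + 1) : ℂ) * x ^ ((#A : ℤ) - 2 * (r + 1)) := by
    rw [matchFun, Finset.sum_range_succ', add_comm]
    simp [matchNumOn_zero]
  have hxAu : x * G.matchFun (A.erase u) x = x ^ #A + ∑ r ∈ range #A,
      (-1) ^ (r + 1) * (G.matchNumOn (A.erase u) (r + 1) : ℂ) * x ^ ((#A : ℤ) - 2 * (r + 1)) := by
    rw [matchFun_eq_sum_range (N := #A + 1) (by omega), Finset.sum_range_succ', mul_add,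
      Finset.mul_sum, add_comm]
    congr 1
    · simp [matchNumOn_zero, ← hAu, pow_succ, mul_comm]
    · refine Finset.sum_congr rfl fun r _ => ?_
      rw [mul_left_comm, ← zpow_one_add₀ hx]
      congr 2
      push_cast
      omega
  have hAuv : ∀ v ∈ (A.erase u).filter (G.Adj u), G.matchFun ((A.erase u).erase v) x =
      ∑ r ∈ range #A, (-1) ^ r * (G.matchNumOn ((A.erase u).erase v) r : ℂ) *
        x ^ ((#A : ℤ) - 2 * (r + 1)) := by
    intro v hv
    have hAuv : #((A.erase u).erase v) + 1 = #(A.erase u) :=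
      Finset.card_erase_add_one (Finset.mem_filter.1 hv).1
    rw [matchFun_eq_sum_range (N := #A) (by omega)]
    refine Finset.sum_congr rfl fun r _ => ?_
    congr 2
    omega
  rw [hA, hxAu, Finset.sum_congr rfl hAuv, Finset.sum_comm]
  simp only [matchNumOn_succ hu, Nat.cast_add, Nat.cast_sum, mul_add, add_mul,
    Finset.sum_add_distrib, Finset.mul_sum, Finset.sum_mul, pow_succ]
  simp only [mul_neg, neg_mul, Finset.sum_neg_distrib, mul_one]
  ring

lemma im_matchFun_div_pos {u : V} {A : Finset V} (hu : u ∈ A) {x : ℂ} (hx : 0 < x.im)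
    (hne : G.matchFun (A.erase u) x ≠ 0)
    (hpos : ∀ v ∈ A.erase u,
      0 < (G.matchFun (A.erase u) x / G.matchFun ((A.erase u).erase v) x).im) :
    0 < (G.matchFun A x / G.matchFun (A.erase u) x).im := by
  have hx0 : x ≠ 0 := fun h => by simp [h] at hx
  have hterm : ∀ v ∈ (A.erase u).filter (G.Adj u),
      (G.matchFun ((A.erase u).erase v) x / G.matchFun (A.erase u) x).im ≤ 0 := by
    intro v hv
    rw [← inv_div, Complex.inv_im]
    exact div_nonpos_of_nonpos_of_nonneg
      (neg_nonpos.2 (hpos v (Finset.mem_filter.1 hv).1).le) (Complex.normSq_nonneg _)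
  rw [matchFun_eq_sub_sum hu hx0, sub_div, mul_div_cancel_right₀ _ hne, Finset.sum_div,
    Complex.sub_im, Complex.im_sum]
  linarith [Finset.sum_nonpos hterm]

end Recursion

theorem matchFun_ne_zero_and_im_div_pos (A : Finset V) {x : ℂ} (hx : 0 < x.im) :
    G.matchFun A x ≠ 0 ∧ ∀ u ∈ A, 0 < (G.matchFun A x / G.matchFun (A.erase u) x).im := by
  classical
  induction A using Finset.strongInduction with
  | H A ih =>
    have hpos : ∀ u ∈ A, 0 < (G.matchFun A x / G.matchFun (A.erase u) x).im := fun u hu =>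
      have ih' := ih _ (Finset.erase_ssubset hu)
      im_matchFun_div_pos hu hx ih'.1 ih'.2
    refine ⟨?_, hpos⟩
    rcases A.eq_empty_or_nonempty with rfl | ⟨u, hu⟩
    · simp [matchFun_empty]
    · intro h
      simpa [h] using hpos u hu

variable (G) in
lemma matchFun_univ_eq_aeval (x : ℂ) : G.matchFun univ x = aeval x (matchPoly G) := by
  have hzero : ∀ r ∈ range (Fintype.card V + 1), r ∉ range (Fintype.card V / 2 + 1) →
      (-1) ^ r * (G.matchNumOn univ r : ℂ) * x ^ ((Fintype.card V : ℤ) - 2 * r) = 0 := by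
    intro r _ hr
    rw [matchNumOn_eq_zero (by simp only [Finset.mem_range] at hr; rw [Finset.card_univ]; omega)]
    simp
  rw [matchFun, Finset.card_univ, ← Finset.sum_subset (Finset.range_subset_range.2
    (by omega)) hzero, matchPoly, map_sum]
  refine Finset.sum_congr rfl fun r hr => ?_
  simp only [Finset.mem_range] at hr
  rw [show (Fintype.card V : ℤ) - 2 * r = ((Fintype.card V - 2 * r : ℕ) : ℤ) by omega,
    zpow_natCast, matchCount_eq_matchNumOn_univ]
  simp

variable (G) in
theorem matchPoly_root_im_eq_zero {z : ℂ} (hz : aeval z (matchPoly G) = 0) : z.im = 0 := by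
  have hne : ∀ w : ℂ, 0 < w.im → aeval w (matchPoly G) ≠ 0 := fun w hw => by
    rw [← matchFun_univ_eq_aeval]
    exact (matchFun_ne_zero_and_im_div_pos univ hw).1
  rcases lt_trichotomy z.im 0 with h | h | h
  · refine absurd ?_ (hne (starRingEnd ℂ z) (by simpa using h))
    rw [aeval_conj, hz, map_zero]
  · exact h
  · exact absurd hz (hne z h)

end HeilmannLieb

section MatchPolyInSq

variable [Fintype V]

variable (G) in
/-- For `|V| = 2n` this is the polynomial `F` with `μ(G, x) = F(x²)`. -/
noncomputable def matchPolyInSq (n : ℕ) : ℝ[X] :=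
  ∑ r ∈ range (n + 1), C ((-1) ^ r * (G.matchNumOn univ r : ℝ)) * X ^ (n - r)

variable {n : ℕ}

lemma coeff_matchPolyInSq {k : ℕ} (hk : k ≤ n) :
    (G.matchPolyInSq n).coeff (n - k) = (-1) ^ k * (G.matchNumOn univ k : ℝ) := by
  rw [matchPolyInSq, finsetSum_coeff, Finset.sum_eq_single k]
  · rw [coeff_C_mul, coeff_X_pow, if_pos rfl, mul_one]
  · intro r hr hrk
    simp only [Finset.mem_range] at hr
    rw [coeff_C_mul, coeff_X_pow, if_neg (by omega), mul_zero]
  · simp only [Finset.mem_range]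
    omega

lemma monic_matchPolyInSq : (G.matchPolyInSq n).Monic := by
  refine monic_of_natDegree_le_of_coeff_eq_one n ((natDegree_sum_le_of_forall_le _ _
    fun r _ => (natDegree_C_mul_X_pow_le _ _).trans (Nat.sub_le _ _))) ?_
  simpa [matchNumOn_zero] using coeff_matchPolyInSq (G := G) (Nat.zero_le n)

lemma natDegree_matchPolyInSq : (G.matchPolyInSq n).natDegree = n := by
  refine le_antisymm (natDegree_sum_le_of_forall_le _ _
    fun r _ => (natDegree_C_mul_X_pow_le _ _).trans (Nat.sub_le _ _)) ?_
  have h := coeff_matchPolyInSq (G := G) (Nat.zero_le n)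
  rw [Nat.sub_zero] at h
  exact le_natDegree_of_ne_zero (by simp [h, matchNumOn_zero])

section Vieta

variable (hS : (G.matchPolyInSq n).Splits)
include hS

lemma prod_roots_matchPolyInSq : (G.matchPolyInSq n).roots.prod = G.matchNumOn univ n := by
  have h := hS.coeff_zero_eq_prod_roots_of_monic monic_matchPolyInSq
  rw [natDegree_matchPolyInSq, ← Nat.sub_self n, coeff_matchPolyInSq le_rfl] at h
  exact (mul_left_cancel₀ (pow_ne_zero n (by norm_num)) h).symm

lemma sum_prod_erase_roots_matchPolyInSq (hn : 1 ≤ n) :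
    ((G.matchPolyInSq n).roots.map fun a => ((G.matchPolyInSq n).roots.erase a).prod).sum =
      G.matchNumOn univ (n - 1) := by
  set s := (G.matchPolyInSq n).roots
  have hcard : Multiset.card s = n := hS.natDegree_eq_card_roots.symm.trans natDegree_matchPolyInSq
  have hcoeff : (derivative (G.matchPolyInSq n)).eval 0 =
      (-1) ^ (n - 1) * (G.matchNumOn univ (n - 1) : ℝ) := by
    rw [← coeff_zero_eq_eval_zero, coeff_derivative, show 0 + 1 = n - (n - 1) by omega,
      coeff_matchPolyInSq (Nat.sub_le n 1)]
    simp
  have hterm : ∀ a ∈ s, ((s.erase a).map (0 - ·)).prod = (-1) ^ (n - 1) * (s.erase a).prod :=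
    fun a ha => by
      rw [show (fun x : ℝ => 0 - x) = Neg.neg from funext zero_sub, Multiset.prod_map_neg,
        Multiset.card_erase_of_mem ha, hcard, Nat.pred_eq_sub_one]
  have h := hS.eval_derivative 0
  rw [hcoeff, monic_matchPolyInSq.leadingCoeff, one_mul, Multiset.map_congr rfl hterm,
    Multiset.sum_map_mul_left] at h
  exact (mul_left_cancel₀ (pow_ne_zero _ (neg_ne_zero.2 one_ne_zero)) h).symm

lemma sum_roots_matchPolyInSq (hn : 1 ≤ n) :
    (G.matchPolyInSq n).roots.sum = G.matchNumOn univ 1 := by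
  have h := hS.nextCoeff_eq_neg_sum_roots_of_monic monic_matchPolyInSq
  rw [nextCoeff_of_natDegree_pos (by rw [natDegree_matchPolyInSq]; omega),
    natDegree_matchPolyInSq, coeff_matchPolyInSq hn] at h
  linarith

end Vieta

variable [DecidableEq V]

lemma matchPoly_eq_comp (hV : Fintype.card V = 2 * n) :
    matchPoly G = (G.matchPolyInSq n).comp (X ^ 2) := by
  rw [matchPoly, matchPolyInSq, ← coe_compRingHom_apply, map_sum, hV,
    show 2 * n / 2 + 1 = n + 1 by omega]
  refine Finset.sum_congr rfl fun r hr => ?_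
  simp only [coe_compRingHom_apply, mul_comp, C_comp, pow_comp, X_comp,
    matchCount_eq_matchNumOn_univ, ← pow_mul]
  congr 2
  simp only [Finset.mem_range] at hr
  omega

lemma exists_sq_eq_of_aeval_matchPolyInSq (hV : Fintype.card V = 2 * n) {τ : ℂ}
    (hτ : aeval τ (G.matchPolyInSq n) = 0) :
    ∃ y : ℝ, (matchPoly G).IsRoot y ∧ (y : ℂ) ^ 2 = τ := by
  obtain ⟨x, hx⟩ := IsAlgClosed.exists_pow_nat_eq τ two_pos
  have hroot : aeval x (matchPoly G) = 0 := by
    rw [matchPoly_eq_comp hV, aeval_comp]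
    simpa [hx] using hτ
  have hxy : (x.re : ℂ) = x := Complex.ext rfl (by simp [matchPoly_root_im_eq_zero G hroot])
  refine ⟨x.re, ?_, by rw [hxy, hx]⟩
  rw [← hxy, ← Complex.coe_algebraMap, aeval_algebraMap_apply_eq_algebraMap_eval] at hroot
  simpa using hroot

lemma splits_matchPolyInSq (hV : Fintype.card V = 2 * n) : (G.matchPolyInSq n).Splits :=
  Splits.of_splits_map (algebraMap ℝ ℂ) (IsAlgClosed.splits _) fun τ hτ => by
    obtain ⟨y, -, hy⟩ := exists_sq_eq_of_aeval_matchPolyInSq hV (mem_aroots.1 hτ).2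
    exact ⟨y ^ 2, by simp [← hy]⟩

lemma one_le_of_mem_roots_matchPolyInSq (hV : Fintype.card V = 2 * n)
    (hpn : 0 < G.matchNumOn univ n)
    (hroot : ∀ x : ℝ, 0 < x → x < 1 → ¬ (matchPoly G).IsRoot x)
    {t : ℝ} (ht : t ∈ (G.matchPolyInSq n).roots) : 1 ≤ t := by
  have hFt : (G.matchPolyInSq n).IsRoot t := isRoot_of_mem_roots ht
  obtain ⟨y, hy, hyt⟩ := exists_sq_eq_of_aeval_matchPolyInSq hV (τ := t) (by
    rw [← Complex.coe_algebraMap, aeval_algebraMap_apply_eq_algebraMap_eval, hFt.eq_zero,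
      map_zero])
  have ht_eq : t = |y| ^ 2 := by
    rw [sq_abs]
    exact_mod_cast hyt.symm
  have habs : (matchPoly G).IsRoot |y| := by
    rw [matchPoly_eq_comp hV] at hy ⊢
    simpa [IsRoot, sq_abs] using hy
  have hy0 : 0 < |y| := by
    refine abs_pos.2 fun hy0 => ?_
    have h := coeff_matchPolyInSq (G := G) (le_refl n)
    have ht0 : t = 0 := by simp [ht_eq, hy0]
    rw [Nat.sub_self, coeff_zero_eq_eval_zero, ← ht0, hFt.eq_zero] at h
    simp [hpn.ne'] at h
  rw [ht_eq]
  exact one_le_pow₀ (not_lt.1 fun h => hroot |y| hy0 h habs)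

theorem matchNumOn_univ_one_eq (hV : Fintype.card V = 2 * n)
    (hpn : 0 < G.matchNumOn univ n)
    (hroot : ∀ x : ℝ, 0 < x → x < 1 → ¬ (matchPoly G).IsRoot x) :
    G.matchNumOn univ 1 = n := by
  rcases Nat.eq_zero_or_pos n with rfl | hn
  · exact matchNumOn_eq_zero (by simp [hV])
  have hS := splits_matchPolyInSq (G := G) hV
  have hcard : Multiset.card (G.matchPolyInSq n).roots = n :=
    hS.natDegree_eq_card_roots.symm.trans natDegree_matchPolyInSq
  have hone := Multiset.eq_one_of_card_mul_prod_le_sum_prod_erase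
    (fun t ht => one_le_of_mem_roots_matchPolyInSq hV hpn hroot ht) (by
      rw [hcard, prod_roots_matchPolyInSq hS, sum_prod_erase_roots_matchPolyInSq hS hn]
      exact_mod_cast card_mul_matchNumOn_le G hV)
  have h := sum_roots_matchPolyInSq hS hn
  rw [Multiset.eq_replicate.2 ⟨hcard, hone⟩, Multiset.sum_replicate, nsmul_one] at h
  exact_mod_cast h.symm

end MatchPolyInSq

end SimpleGraph

open SimpleGraph in
theorem stmt_14 {V : Type*} [Fintype V] [DecidableEq V] (G : SimpleGraph V)
    (n : ℕ) (hV : Fintype.card V = 2 * n)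
    (hpm : ∃ M : G.Subgraph, M.IsPerfectMatching)
    (hroot : ∀ x : ℝ, 0 < x → x < 1 → ¬ (matchPoly G).IsRoot x) :
    G.edgeSet.ncard = n ∧ ∀ v : V, ∃! w : V, G.Adj v w := by
  obtain ⟨M, hM⟩ := hpm
  obtain ⟨s, hs, hsM⟩ := hM.exists_mem_matchingsOn hV
  have hedges : G.edgeSet.ncard = n := by
    rw [← matchNumOn_univ_one, matchNumOn_univ_one_eq hV (Finset.card_pos.2 ⟨s, hs⟩) hroot]
  have hMG : M.edgeSet = G.edgeSet := by
    refine Set.eq_of_subset_of_ncard_le M.edgeSet_subset ?_ (Set.toFinite _)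
    rw [hedges, ← hsM, Set.ncard_coe_finset, (mem_matchingsOn.1 hs).2]
  refine ⟨hedges, fun v => ?_⟩
  obtain ⟨w, hw, huniq⟩ := hM.1 (hM.2 v)
  refine ⟨w, hw.adj_sub, fun y hy => huniq y ?_⟩
  show M.Adj v y
  rw [← Subgraph.mem_edgeSet, hMG, mem_edgeSet]
  exact hy
end

section
/- If H is a graph whose largest independent set has size at most 2, then H has a Hamiltonian cycle or V(H) can be partitioned into two (possibly empty) cliques. -/
/-!
Since `H` has no independent set of size three, the non-neighbours of any vertex `a` form a
clique. We induct on a finite vertex set `s`, maintaining either a cycle through exactly the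
vertices of `s` or a partition of `s` into two cliques, and add one vertex `a ∉ s` at a time.

On a cycle, if `a` has at most one neighbour `u`, then `{a, u}` and the rest of the cycle are two
cliques. Otherwise `a` is inserted between two consecutive neighbours; if there are none, the
successors `x, x'` of two neighbours `u, u'` are non-neighbours of `a`, hence adjacent, and
`a u' ⋯ x x' ⋯ u a` is a longer cycle.

On two cliques `A, B`, the vertex `a` joins a clique it is complete to; if it has no neighbour in
`A`, then `A` together with the non-neighbours in `B` is one clique and `a` with its neighbours
in `B` the other; and if it has a neighbour and a non-neighbour on both sides, then it closes a
cycle through both cliques, the edge between the two non-neighbours joining them.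
-/

theorem Cycle.coe_append_comm {α : Type*} (l l' : List α) :
    (↑(l ++ l') : Cycle α) = ↑(l' ++ l) :=
  Cycle.coe_eq_coe.mpr List.isRotated_append

theorem Cycle.exists_eq_coe_cons_of_mem {α : Type*} {c : Cycle α} {a : α} (h : a ∈ c) :
    ∃ l : List α, c = ↑(a :: l) := by
  obtain ⟨L, rfl⟩ := Quot.exists_rep c
  obtain ⟨l₁, l₂, rfl⟩ := List.append_of_mem (Cycle.mem_coe_iff.mp h)
  exact ⟨l₂ ++ l₁, Cycle.coe_append_comm _ _⟩

namespace SimpleGraph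

variable {V : Type*} {G : SimpleGraph V}

theorem IsClique.isChain_of_nodup {S : Set V} (hS : G.IsClique S) {l : List V} (hl : l.Nodup)
    (hlS : ∀ v ∈ l, v ∈ S) : l.IsChain G.Adj :=
  (hl.pairwise_of_forall_ne fun x hx y hy hxy => hS (hlS x hx) (hlS y hy) hxy).isChain

theorem isClique_compl_neighborSet_sdiff_singleton
    (hindep : ∀ s : Set V, s.Pairwise (fun a b => ¬ G.Adj a b) → s.ncard ≤ 2) (a : V) :
    G.IsClique ((G.neighborSet a)ᶜ \ {a}) := by
  rintro x ⟨hax, hxa⟩ y ⟨hay, hya⟩ hxy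
  by_contra hnxy
  simp only [Set.mem_compl_iff, mem_neighborSet, Set.mem_singleton_iff] at hax hxa hay hya
  have hpair : ({a, x, y} : Set V).Pairwise fun u v => ¬ G.Adj u v := by
    simp [Set.pairwise_insert, hax, hay, hnxy, G.adj_comm]
  have hcard := Set.ncard_eq_three.mpr ⟨a, x, y, Ne.symm hxa, Ne.symm hya, hxy, rfl⟩
  have := hindep _ hpair
  omega

structure IsCycleOn (G : SimpleGraph V) (c : Cycle V) (s : Finset V) : Prop where
  nodup : c.Nodup
  chain : c.Chain G.Adj
  three_le_length : 3 ≤ c.length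
  mem_iff : ∀ v, v ∈ c ↔ v ∈ s

theorem IsCycleOn.exists_isHamiltonianCycle [Fintype V] [DecidableEq V] {c : Cycle V}
    (h : G.IsCycleOn c Finset.univ) : ∃ (a : V) (p : G.Walk a a), p.IsHamiltonianCycle := by
  obtain ⟨L, rfl⟩ := Quot.exists_rep c
  rw [Cycle.mk_eq_coe] at h
  obtain ⟨hnodup, hchain, hlen, hmem⟩ := h
  rcases L with _ | ⟨u, _ | ⟨x, l⟩⟩
  · simp at hlen
  · simp at hlen
  simp only [Cycle.chain_coe_cons, List.cons_append, List.isChain_cons_cons] at hchain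
  obtain ⟨p, hp⟩ : ∃ p : G.Walk x u, p.support = x :: l ++ [u] :=
    ⟨(Walk.ofSupport _ (List.cons_ne_nil _ _) hchain.2).copy (by simp) (by simp),
      (Walk.support_copy _ _ _).trans (Walk.support_ofSupport _ _)⟩
  have hpath : p.IsPath := by
    rw [Walk.isPath_def, hp]
    exact (List.perm_append_singleton _ _).nodup_iff.mpr hnodup
  have hlength : p.length = l.length + 1 := by
    have := p.length_support
    simp only [hp, List.length_append, List.length_cons, List.length_nil] at this
    omega
  have hham : p.IsHamiltonian := hpath.isHamiltonian_of_mem fun w => by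
    rw [hp, (List.perm_append_singleton _ _).mem_iff, ← Cycle.mem_coe_iff, hmem]
    exact Finset.mem_univ w
  refine ⟨u, .cons hchain.1 p,
    Walk.isHamiltonianCycle_iff_isCycle_and_support_count_tail_eq_one.mpr ⟨?_, hham⟩⟩
  refine Walk.isCycle_iff_isPath_tail_and_le_length.mpr ⟨by simpa using hpath, ?_⟩
  simp only [Cycle.length_coe, List.length_cons] at hlen
  simp only [Walk.length_cons, hlength]
  omega

variable [DecidableEq V] {s : Finset V} {a : V}

def SplitsIntoTwoCliques (G : SimpleGraph V) (s : Finset V) : Prop :=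
  ∃ A B : Finset V, Disjoint A B ∧ A ∪ B = s ∧
    G.IsClique (A : Set V) ∧ G.IsClique (B : Set V)

theorem IsClique.exists_spanning_isChain {A : Finset V} (hA : G.IsClique (A : Set V)) {p q : V}
    (hp : p ∈ A) (hq : q ∈ A) (hpq : p ≠ q) :
    ∃ l : List V, (p :: (l ++ [q])).Nodup ∧ (p :: (l ++ [q])).IsChain G.Adj ∧
      ∀ v, v ∈ p :: (l ++ [q]) ↔ v ∈ A := by
  have hnodup : (p :: (((A.erase p).erase q).toList ++ [q])).Nodup := by
    simp only [List.nodup_cons, List.nodup_append, List.mem_append, Finset.mem_toList,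
      Finset.mem_erase, List.mem_singleton, Finset.nodup_toList]
    grind
  have hmem : ∀ v, v ∈ p :: (((A.erase p).erase q).toList ++ [q]) ↔ v ∈ A := by
    intro v
    simp only [List.mem_cons, List.mem_append, Finset.mem_toList, Finset.mem_erase]
    grind
  exact ⟨_, hnodup, hA.isChain_of_nodup hnodup fun v hv => (hmem v).mp hv, hmem⟩

theorem IsCycleOn.insert_of_perm {l l' : List V} (h : G.IsCycleOn l s) (ha : a ∉ s)
    (hperm : l'.Perm (a :: l)) (hchain : Cycle.Chain G.Adj l') :
    G.IsCycleOn l' (insert a s) where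
  nodup := hperm.nodup_iff.mpr
    (List.nodup_cons.mpr ⟨fun hal => ha ((h.mem_iff a).mp hal), h.nodup⟩)
  chain := hchain
  three_le_length := by
    have := h.three_le_length
    simp only [Cycle.length_coe, hperm.length_eq, List.length_cons] at this ⊢
    omega
  mem_iff v := by
    simp only [Cycle.mem_coe_iff, hperm.mem_iff, List.mem_cons, Finset.mem_insert, ← h.mem_iff]

theorem IsCycleOn.insert_between {u v : V} {l : List V} (h : G.IsCycleOn ↑(u :: v :: l) s)
    (ha : a ∉ s) (hu : G.Adj a u) (hv : G.Adj a v) :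
    G.IsCycleOn ↑(u :: a :: v :: l) (insert a s) := by
  refine h.insert_of_perm ha (.swap _ _ _) ?_
  have hchain := h.chain
  simp only [Cycle.chain_coe_cons, List.cons_append, List.isChain_cons_cons] at hchain ⊢
  exact ⟨hu.symm, hv, hchain.2⟩

theorem IsCycleOn.insert_crossing {u x u' x' : V} {p q : List V}
    (h : G.IsCycleOn ↑(u :: x :: p ++ u' :: x' :: q) s) (ha : a ∉ s)
    (hu : G.Adj a u) (hu' : G.Adj a u') (hx : G.Adj x x') :
    G.IsCycleOn ↑(u :: a :: u' :: (p.reverse ++ x :: x' :: q)) (insert a s) := by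
  refine h.insert_of_perm ha ?_ ?_
  · rw [List.perm_iff_count]
    intro b
    simp only [List.count_cons, List.count_append, List.count_reverse, List.cons_append]
    omega
  · have hchain := h.chain
    simp only [Cycle.chain_coe_cons, List.cons_append, List.append_assoc, List.isChain_cons_cons,
      List.isChain_cons_append_cons_cons] at hchain ⊢
    have hback := List.isChain_reverse.mpr (hchain.2.1.imp fun _ _ h => h.symm)
    simp only [List.reverse_cons, List.reverse_append, List.reverse_nil, List.nil_append,
      List.cons_append] at hback
    exact ⟨hu.symm, hu', hback, hx, hchain.2.2.2⟩

theorem IsCycleOn.exists_isCycleOn_insert_of_adj_of_adj {c : Cycle V} (h : G.IsCycleOn c s)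
    (ha : a ∉ s) (hnon : G.IsClique (↑s \ G.neighborSet a)) {u u' : V} (hu : u ∈ s)
    (hu' : u' ∈ s) (huu' : u ≠ u') (hau : G.Adj a u) (hau' : G.Adj a u') :
    ∃ c', G.IsCycleOn c' (insert a s) := by
  by_cases hconsec : ∃ w w' l, c = ↑(w :: w' :: l) ∧ G.Adj a w ∧ G.Adj a w'
  · obtain ⟨w, w', l, rfl, hw, hw'⟩ := hconsec
    exact ⟨_, h.insert_between ha hw hw'⟩
  push Not at hconsec
  obtain ⟨l, rfl⟩ := Cycle.exists_eq_coe_cons_of_mem ((h.mem_iff u).mpr hu)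
  have hu'l : u' ∈ l := by
    simpa [huu'.symm] using (h.mem_iff u').mpr hu'
  obtain ⟨l₁, l₂, rfl⟩ := List.append_of_mem hu'l
  rcases l₁ with _ | ⟨x, p⟩
  · exact absurd hau' (hconsec u u' l₂ rfl hau)
  rcases l₂ with _ | ⟨x', q⟩
  · exact absurd hau (hconsec u' u (x :: p) (Cycle.coe_append_comm (u :: x :: p) [u']) hau')
  have hx : ¬ G.Adj a x := hconsec u x _ rfl hau
  have hx' : ¬ G.Adj a x' :=
    hconsec u' x' (q ++ u :: x :: p) (Cycle.coe_append_comm (u :: x :: p) _) hau'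
  have hxx' : x ≠ x' :=
    (List.nodup_append.mp (List.nodup_cons.mp h.nodup).2).2.2 x List.mem_cons_self x' (by simp)
  have hxs : x ∈ s := (h.mem_iff x).mp (by simp)
  have hx's : x' ∈ s := (h.mem_iff x').mp (by simp)
  exact ⟨_, h.insert_crossing ha hau hau' (hnon ⟨hxs, hx⟩ ⟨hx's, hx'⟩ hxx')⟩

theorem exists_isCycleOn_insert_union {A B : Finset V} (hAB : Disjoint A B)
    (hA : G.IsClique (A : Set V)) (hB : G.IsClique (B : Set V)) (ha : a ∉ A ∪ B)
    {pA qA pB qB : V} (hpA : pA ∈ A) (hqA : qA ∈ A) (hpB : pB ∈ B) (hqB : qB ∈ B)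
    (hpqA : pA ≠ qA) (hpqB : pB ≠ qB)
    (hapA : G.Adj a pA) (hq : G.Adj qA qB) (hapB : G.Adj a pB) :
    ∃ c, G.IsCycleOn c (insert a (A ∪ B)) := by
  obtain ⟨lA, hnodupA, hchainA, hmemA⟩ := hA.exists_spanning_isChain hpA hqA hpqA
  obtain ⟨lB, hnodupB, hchainB, hmemB⟩ := hB.exists_spanning_isChain hqB hpB hpqB.symm
  refine ⟨↑(a :: (pA :: (lA ++ [qA]) ++ qB :: (lB ++ [pB]))), ⟨?_, ?_, ?_, ?_⟩⟩
  · rw [Cycle.nodup_coe_iff, List.nodup_cons, List.nodup_append, List.mem_append, hmemA, hmemB]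
    exact ⟨by simpa using ha, hnodupA, hnodupB, fun v hvA w hwB => Finset.disjoint_left.mp hAB
      ((hmemA v).mp hvA) ∘ fun hvw => hvw ▸ (hmemB w).mp hwB⟩
  · have hchainB' : (qB :: (lB ++ [pB]) ++ [a]).IsChain G.Adj :=
      hchainB.append (.singleton a) (by
        rw [← List.cons_append, List.getLast?_concat]
        simpa using hapB.symm)
    have hchain := hchainA.append hchainB' (by
      rw [← List.cons_append, List.getLast?_concat]
      simpa using hq)
    simpa [hapA] using hchain
  · simp only [Cycle.length_coe, List.length_cons, List.length_append]
    omega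
  · intro v
    simp only [Cycle.mem_coe_iff, List.mem_cons, List.mem_append, hmemA, hmemB, Finset.mem_insert,
      Finset.mem_union]

theorem splitsIntoTwoCliques_insert_of_forall_not_adj {A B : Finset V} (hAB : Disjoint A B)
    (hB : G.IsClique (B : Set V)) (ha : a ∉ A ∪ B)
    (hnon : G.IsClique (↑(A ∪ B) \ G.neighborSet a)) (hA : ∀ x ∈ A, ¬ G.Adj a x) :
    G.SplitsIntoTwoCliques (insert a (A ∪ B)) := by
  classical
  refine ⟨A ∪ B.filter (¬ G.Adj a ·), insert a (B.filter (G.Adj a ·)), ?_, ?_, ?_, ?_⟩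
  · simp only [Finset.disjoint_insert_right, Finset.disjoint_union_left, Finset.mem_union,
      Finset.mem_filter]
    exact ⟨by simpa using ha, hAB.mono_right (Finset.filter_subset _ _),
      (Finset.disjoint_filter_filter_not _ _ _).symm⟩
  · ext v
    simp only [Finset.mem_union, Finset.mem_filter, Finset.mem_insert]
    tauto
  · refine hnon.subset ?_
    intro v
    simp only [Finset.coe_union, Finset.coe_filter, Set.mem_union, Set.mem_sdiff, mem_neighborSet]
    grind
  · rw [Finset.coe_insert]
    refine (hB.subset (Finset.coe_subset.mpr (Finset.filter_subset _ _))).insert ?_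
    simp only [Finset.coe_filter]
    exact fun b hb _ => hb.2

theorem IsCycleOn.isCycleOn_insert_or_splitsIntoTwoCliques {c : Cycle V}
    (h : G.IsCycleOn c s) (ha : a ∉ s) (hnon : G.IsClique (↑s \ G.neighborSet a)) :
    (∃ c', G.IsCycleOn c' (insert a s)) ∨ G.SplitsIntoTwoCliques (insert a s) := by
  by_cases hnbr : ∃ u ∈ s, G.Adj a u
  · obtain ⟨u, hu, hau⟩ := hnbr
    by_cases hnbr₂ : ∃ u' ∈ s, u' ≠ u ∧ G.Adj a u'
    · obtain ⟨u', hu', hne, hau'⟩ := hnbr₂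
      exact .inl (h.exists_isCycleOn_insert_of_adj_of_adj ha hnon hu hu' hne.symm hau hau')
    push Not at hnbr₂
    refine .inr ⟨{a, u}, s.erase u, ?_, ?_, ?_, hnon.subset ?_⟩
    · simp [ha]
    · rw [Finset.insert_union, ← Finset.insert_eq, Finset.insert_erase hu]
    · rw [Finset.coe_pair]
      exact isClique_pair.mpr fun _ => hau
    · intro v hv
      rw [Finset.coe_erase, Set.mem_sdiff_singleton] at hv
      exact Set.mem_sdiff_of_mem hv.1 (hnbr₂ v hv.1 hv.2)
  · push Not at hnbr
    exact .inr ⟨{a}, s, by simpa using ha, (Finset.insert_eq a s).symm, by simp,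
      hnon.subset fun v hv => Set.mem_sdiff_of_mem hv (hnbr v hv)⟩

theorem SplitsIntoTwoCliques.isCycleOn_insert_or_splitsIntoTwoCliques
    (h : G.SplitsIntoTwoCliques s) (ha : a ∉ s) (hnon : G.IsClique (↑s \ G.neighborSet a)) :
    (∃ c, G.IsCycleOn c (insert a s)) ∨ G.SplitsIntoTwoCliques (insert a s) := by
  obtain ⟨A, B, hAB, rfl, hA, hB⟩ := h
  by_cases hallA : ∀ x ∈ A, G.Adj a x
  · refine .inr ⟨insert a A, B, ?_, Finset.insert_union .., ?_, hB⟩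
    · exact Finset.disjoint_insert_left.mpr ⟨fun h => ha (Finset.mem_union_right _ h), hAB⟩
    · rw [Finset.coe_insert]
      exact hA.insert fun b hb _ => hallA b hb
  by_cases hallB : ∀ x ∈ B, G.Adj a x
  · refine .inr ⟨A, insert a B, ?_, Finset.union_insert .., hA, ?_⟩
    · exact Finset.disjoint_insert_right.mpr ⟨fun h => ha (Finset.mem_union_left _ h), hAB⟩
    · rw [Finset.coe_insert]
      exact hB.insert fun b hb _ => hallB b hb
  by_cases hnoneA : ∀ x ∈ A, ¬ G.Adj a x
  · exact .inr (splitsIntoTwoCliques_insert_of_forall_not_adj hAB hB ha hnon hnoneA)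
  by_cases hnoneB : ∀ x ∈ B, ¬ G.Adj a x
  · rw [Finset.union_comm] at ha hnon ⊢
    exact .inr (splitsIntoTwoCliques_insert_of_forall_not_adj hAB.symm hA ha hnon hnoneB)
  push Not at hallA hallB hnoneA hnoneB
  obtain ⟨qA, hqA, haqA⟩ := hallA
  obtain ⟨qB, hqB, haqB⟩ := hallB
  obtain ⟨pA, hpA, hapA⟩ := hnoneA
  obtain ⟨pB, hpB, hapB⟩ := hnoneB
  have hq : G.Adj qA qB := hnon ⟨Finset.mem_union_left _ hqA, haqA⟩
    ⟨Finset.mem_union_right _ hqB, haqB⟩ fun h => Finset.disjoint_left.mp hAB hqA (h ▸ hqB)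
  exact .inl (exists_isCycleOn_insert_union hAB hA hB ha hpA hqA hpB hqB
    (fun h => haqA (h ▸ hapA)) (fun h => haqB (h ▸ hapB)) hapA hq hapB)

theorem exists_isCycleOn_or_splitsIntoTwoCliques
    (hα : ∀ a, G.IsClique ((G.neighborSet a)ᶜ \ {a})) (s : Finset V) :
    (∃ c, G.IsCycleOn c s) ∨ G.SplitsIntoTwoCliques s := by
  induction s using Finset.induction_on with
  | empty => exact .inr ⟨∅, ∅, by simp, by simp, by simp, by simp⟩
  | insert a s ha ih =>
    have hnon : G.IsClique (↑s \ G.neighborSet a) :=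
      (hα a).subset fun x hx => Set.mem_sdiff_of_mem hx.2 fun (hxa : x = a) => ha (hxa ▸ hx.1)
    rcases ih with ⟨c, hc⟩ | hs
    · exact hc.isCycleOn_insert_or_splitsIntoTwoCliques ha hnon
    · exact hs.isCycleOn_insert_or_splitsIntoTwoCliques ha hnon

end SimpleGraph

open SimpleGraph in
theorem stmt_15 {V : Type*} [Fintype V] [DecidableEq V] (H : SimpleGraph V)
    (hindep : ∀ s : Set V, s.Pairwise (fun a b => ¬ H.Adj a b) → s.ncard ≤ 2) :
    (∃ (a : V) (c : H.Walk a a), c.IsHamiltonianCycle) ∨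
    (∃ A B : Set V, A ∪ B = Set.univ ∧ A ∩ B = ∅ ∧
      H.IsClique A ∧ H.IsClique B) := by
  rcases exists_isCycleOn_or_splitsIntoTwoCliques
    (isClique_compl_neighborSet_sdiff_singleton hindep) Finset.univ with
    ⟨c, hc⟩ | ⟨A, B, hAB, hunion, hA, hB⟩
  · exact .inl hc.exists_isHamiltonianCycle
  · refine .inr ⟨A, B, ?_, ?_, hA, hB⟩
    · rw [← Finset.coe_union, hunion, Finset.coe_univ]
    · exact Set.disjoint_iff_inter_eq_empty.mp (Finset.disjoint_coe.mpr hAB)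
end

section
/- Let G be a connected claw-free graph and v a vertex of maximum degree Δ. Then for every neighbor u of v there is a path starting at u that covers all of N(v) ∪ {v}; consequently G contains a path on Δ+1 vertices, and on Δ+2 vertices if V(G) ≠ N(v) ∪ {v}. -/
/-- A graph is claw-free if whenever a vertex has three distinct neighbors,
two of them are adjacent (no induced `K_{1,3}`). -/
def ClawFree {V : Type*} (G : SimpleGraph V) : Prop :=
  ∀ a b c d : V, G.Adj a b → G.Adj a c → G.Adj a d →
    b ≠ c → b ≠ d → c ≠ d → (G.Adj b c ∨ G.Adj b d ∨ G.Adj c d)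


open SimpleGraph in
/-- For a clique `C` with `v` adjacent to every vertex of `C`, there is a path
starting at `v` whose support is exactly `{v} ∪ C`. -/
lemma cliquePath {V : Type*} [DecidableEq V] (G : SimpleGraph V) (C : Finset V) :
    ∀ v : V, (∀ x ∈ C, G.Adj v x) → (∀ x ∈ C, ∀ y ∈ C, x ≠ y → G.Adj x y) →
    ∃ (w : V) (p : G.Walk v w), p.IsPath ∧ ∀ x, x ∈ p.support ↔ (x = v ∨ x ∈ C) := by
  induction C using Finset.strongInduction with
  | _ C ih =>
    intro v hadj hclq
    rcases C.eq_empty_or_nonempty with rfl | ⟨c, hc⟩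
    · exact ⟨v, .nil, by simp, by simp⟩
    · obtain ⟨w, p, hp, hsup⟩ := ih (C.erase c) (Finset.erase_ssubset hc) c
        (fun x hx => hclq c hc x (Finset.mem_of_mem_erase hx) (Finset.ne_of_mem_erase hx).symm)
        (fun x hx y hy => hclq x (Finset.mem_of_mem_erase hx) y (Finset.mem_of_mem_erase hy))
      have hvc : v ≠ c := (hadj c hc).ne

      refine ⟨w, .cons (hadj c hc) p, ?_, ?_⟩
      · rw [SimpleGraph.Walk.cons_isPath_iff]
        refine ⟨hp, fun hv => ?_⟩
        rcases (hsup v).1 hv with h | h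
        · exact hvc h
        · exact (G.irrefl (hadj v (Finset.mem_of_mem_erase h)))
      · intro x
        simp only [SimpleGraph.Walk.support_cons, List.mem_cons, hsup x]
        constructor
        · rintro (rfl | rfl | h)
          · left; rfl
          · right; exact hc
          · right; exact Finset.mem_of_mem_erase h
        · rintro (rfl | h)
          · left; rfl
          · by_cases hxc : x = c
            · right; left; exact hxc
            · right; right; exact Finset.mem_erase.2 ⟨hxc, h⟩

lemma keyPath {V : Type*} [DecidableEq V] (G : SimpleGraph V) [DecidableRel G.Adj]
    (hcf : ClawFree G) (S : Finset V) :
    ∀ v u : V, u ∈ S → (∀ x ∈ S, G.Adj v x) →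
    ∃ (w : V) (p : G.Walk u w), p.IsPath ∧ ∀ x, x ∈ p.support ↔ (x = v ∨ x ∈ S) := by
  induction S using Finset.strongInduction with
  | _ S ih =>
    intro v u hu hadj
    by_cases hex : ∃ w ∈ S.erase u, G.Adj u w
    · obtain ⟨w0, hw0, huw0⟩ := hex
      obtain ⟨w, p, hp, hsup⟩ := ih (S.erase u) (Finset.erase_ssubset hu) v w0 hw0
        (fun x hx => hadj x (Finset.mem_of_mem_erase hx))
      refine ⟨w, .cons huw0 p, ?_, ?_⟩
      · rw [SimpleGraph.Walk.cons_isPath_iff]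
        refine ⟨hp, fun h => ?_⟩
        rcases (hsup u).1 h with h | h
        · exact G.irrefl (h ▸ hadj u hu)
        · exact (Finset.notMem_erase u S) h
      · intro x
        simp only [SimpleGraph.Walk.support_cons, List.mem_cons, hsup x]
        constructor
        · rintro (rfl | h | h)
          · right; exact hu
          · left; exact h
          · right; exact Finset.mem_of_mem_erase h
        · rintro (rfl | h)
          · right; left; rfl
          · by_cases hxu : x = u
            · left; exact hxu
            · right; right; exact Finset.mem_erase.2 ⟨hxu, h⟩
    · push_neg at hex
      have hclq : ∀ x ∈ S.erase u, ∀ y ∈ S.erase u, x ≠ y → G.Adj x y := by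
        intro x hx y hy hxy
        have hux : u ≠ x := fun h => (Finset.notMem_erase u S) (h ▸ hx)
        have huy : u ≠ y := fun h => (Finset.notMem_erase u S) (h ▸ hy)
        rcases hcf v u x y (hadj u hu) (hadj x (Finset.mem_of_mem_erase hx))
          (hadj y (Finset.mem_of_mem_erase hy)) hux huy hxy with h | h | h
        · exact absurd h (hex x hx)
        · exact absurd h (hex y hy)
        · exact h
      obtain ⟨w, q, hq, hsup⟩ := cliquePath G (S.erase u) v
        (fun x hx => hadj x (Finset.mem_of_mem_erase hx)) hclq
      refine ⟨w, .cons (hadj u hu).symm q, ?_, ?_⟩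
      · rw [SimpleGraph.Walk.cons_isPath_iff]
        refine ⟨hq, fun h => ?_⟩
        rcases (hsup u).1 h with h | h
        · exact G.irrefl (h ▸ hadj u hu)
        · exact (Finset.notMem_erase u S) h
      · intro x
        simp only [SimpleGraph.Walk.support_cons, List.mem_cons, hsup x]
        constructor
        · rintro (rfl | h | h)
          · right; exact hu
          · left; exact h
          · right; exact Finset.mem_of_mem_erase h
        · rintro (rfl | h)
          · right; left; rfl
          · by_cases hxu : x = u
            · left; exact hxu
            · right; right; exact Finset.mem_erase.2 ⟨hxu, h⟩


theorem stmt_16 {V : Type*} [Fintype V] [DecidableEq V] (G : SimpleGraph V)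
    [DecidableRel G.Adj] (hconn : G.Connected) (hcf : ClawFree G)
    (v : V) (hmax : ∀ u : V, G.degree u ≤ G.degree v) :
    (∀ u : V, G.Adj v u →
      ∃ (w : V) (p : G.Walk u w), p.IsPath ∧
        ∀ x : V, x ∈ insert v (G.neighborSet v) → x ∈ p.support) ∧
    (∃ (a b : V) (p : G.Walk a b), p.IsPath ∧ G.degree v + 1 ≤ p.length + 1) ∧
    (insert v (G.neighborSet v) ≠ Set.univ →
      ∃ (a b : V) (p : G.Walk a b), p.IsPath ∧ G.degree v + 2 ≤ p.length + 1) := by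
  -- main covering lemma, for any neighbor u
  have main : ∀ u : V, G.Adj v u → ∃ (w : V) (p : G.Walk u w), p.IsPath ∧
      ∀ x, x ∈ p.support ↔ (x = v ∨ x ∈ G.neighborFinset v) := by
    intro u hu
    exact keyPath G hcf (G.neighborFinset v) v u
      ((G.mem_neighborFinset v u).2 hu) (fun x hx => (G.mem_neighborFinset v x).1 hx)
  -- length bound for such covering paths
  have lenbound : ∀ (u w : V) (p : G.Walk u w), p.IsPath →
      (∀ x, x ∈ p.support ↔ (x = v ∨ x ∈ G.neighborFinset v)) →
      G.degree v + 1 ≤ p.length + 1 := by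
    intro u w p hp hsup
    have hsub : insert v (G.neighborFinset v) ⊆ p.support.toFinset := by
      intro x hx
      rw [List.mem_toFinset, hsup x]
      rcases Finset.mem_insert.1 hx with rfl | h
      · exact Or.inl rfl
      · exact Or.inr h
    have h1 : (insert v (G.neighborFinset v)).card ≤ p.support.toFinset.card :=
      Finset.card_le_card hsub
    have h2 : (insert v (G.neighborFinset v)).card = G.degree v + 1 := by
      rw [Finset.card_insert_of_notMem (G.notMem_neighborFinset_self v),
        G.card_neighborFinset_eq_degree]
    have h3 : p.support.toFinset.card = p.support.length :=
      List.toFinset_card_of_nodup hp.support_nodup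
    rw [SimpleGraph.Walk.length_support] at h3
    omega
  refine ⟨?_, ?_, ?_⟩
  · intro u hu
    obtain ⟨w, p, hp, hsup⟩ := main u hu
    refine ⟨w, p, hp, fun x hx => ?_⟩
    rw [hsup x]
    rcases hx with rfl | h
    · exact Or.inl rfl
    · exact Or.inr ((G.mem_neighborFinset v x).2 h)
  · by_cases hex : ∃ u, G.Adj v u
    · obtain ⟨u, hu⟩ := hex
      obtain ⟨w, p, hp, hsup⟩ := main u hu
      exact ⟨u, w, p, hp, lenbound u w p hp hsup⟩
    · push_neg at hex
      have hdeg : G.degree v = 0 := by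
        rw [← G.card_neighborFinset_eq_degree, Finset.card_eq_zero, Finset.eq_empty_iff_forall_notMem]
        intro x hx
        exact hex x ((G.mem_neighborFinset v x).1 hx)
      exact ⟨v, v, .nil, by simp, by omega⟩
  · intro hne
    have : ∃ y, y ∉ insert v (G.neighborSet v) := by
      by_contra h
      push_neg at h
      exact hne (Set.eq_univ_of_forall h)
    obtain ⟨y, hy⟩ := this
    have hyv : v ≠ y := fun h => hy (h ▸ Set.mem_insert v _)
    obtain ⟨W⟩ := hconn.preconnected v y
    obtain ⟨d, _, hdS, hdnS⟩ := W.exists_boundary_dart (insert v (G.neighborSet v))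
      (Set.mem_insert v _) hy
    have hadj : G.Adj d.fst d.snd := d.adj
    have hfst : G.Adj v d.fst := by
      rcases Set.mem_insert_iff.1 hdS with h | h
      · exact absurd (Set.mem_insert_iff.2 (Or.inr (h ▸ hadj))) hdnS
      · exact h
    obtain ⟨w, p, hp, hsup⟩ := main d.fst hfst
    have hns : d.snd ∉ p.support := by
      rw [hsup]
      rintro (h | h)
      · subst h; exact hdnS (Set.mem_insert _ _)
      · exact hdnS (Set.mem_insert_iff.2 (Or.inr ((G.mem_neighborFinset v _).1 h)))
    refine ⟨d.snd, w, .cons hadj.symm p, (SimpleGraph.Walk.cons_isPath_iff _ _).2 ⟨hp, hns⟩, ?_⟩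
    have := lenbound d.fst w p hp hsup
    simp only [SimpleGraph.Walk.length_cons]
    omega
end

section
/- There is no graph on 7+2α vertices (α ≥ 0) with maximum degree at most 6, having 29+α edges and degree-square sum Σd_i^2 = 382+2α; indeed Σ(d_i−1)(d_i−6) would have to be nonpositive but equals 18. -/
theorem stmt_17 :
    ¬ ∃ (V : Type) (_ : Fintype V) (_ : DecidableEq V) (G : SimpleGraph V)
        (_ : DecidableRel G.Adj) (α : ℕ),
        Fintype.card V = 7 + 2 * α ∧
        (∀ v : V, 1 ≤ G.degree v ∧ G.degree v ≤ 6) ∧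
        G.edgeFinset.card = 29 + α ∧
        (∑ v : V, (G.degree v) ^ 2) = 382 + 2 * α := by
  rintro ⟨V, _, _, G, _, α, hcard, hdeg, hE, hsq⟩
  have hsum : ∑ v : V, G.degree v = 2 * (29 + α) := by
    rw [G.sum_degrees_eq_twice_card_edges, hE]
  have key : ∀ v : V, G.degree v ^ 2 + 6 ≤ 7 * G.degree v := by
    intro v
    obtain ⟨h1, h2⟩ := hdeg v
    nlinarith
  have hle : ∑ v : V, (G.degree v ^ 2 + 6) ≤ ∑ v : V, 7 * G.degree v :=
    Finset.sum_le_sum fun v _ => key v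
  rw [Finset.sum_add_distrib, Finset.sum_const, ← Finset.mul_sum] at hle
  simp only [smul_eq_mul, Finset.card_univ, hcard, hsq, hsum] at hle
  omega
end
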